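/- arXiv:2501.14545 — 2 statements merged into one kernel-verified Lean document; each statement's English description precedes it below -/
import Mathlib

section
/- For every real x > 0 and every T ≥ 3, the quantity 𝓕(x,T) := Σ_{ρ,ρ' : T<γ,γ'≤2T} x^{ρ−ρ'} W(ρ−ρ'), where W(u) = 4/(4 − u²) and the sums run over pairs of nontrivial zeros ρ = β+iγ, ρ' = β'+iγ' of the Riemann zeta function counted with multiplicity, is a nonnegative real number, and moreover 𝓕(1/x, T) = 𝓕(x, T). -/
open Filter Topology MeasureTheory Set

/-- The multiplicity of `ρ` as a zero of the Riemann zeta function: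
the least `n` such that the `n`-th iterated derivative of `ζ` is nonzero at `ρ`. -/
noncomputable def zetaMult (ρ : ℂ) : ℕ :=
  sInf {n : ℕ | iteratedDeriv n riemannZeta ρ ≠ 0}

/-- `ρ` is a nontrivial zero of the Riemann zeta function. -/
def IsNontrivialZero (ρ : ℂ) : Prop :=
  riemannZeta ρ = 0 ∧ 0 < ρ.re ∧ ρ.re < 1

/-- The set of nontrivial zeros `ρ = β + iγ` with `T < γ ≤ 2T`. -/
def zeroBand (T : ℝ) : Set ℂ :=
  {ρ | IsNontrivialZero ρ ∧ T < ρ.im ∧ ρ.im ≤ 2 * T}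

/-- Number of nontrivial zeros with `T < γ ≤ 2T`, counted with multiplicity. -/
noncomputable def Ntot (T : ℝ) : ℝ :=
  ∑ᶠ ρ ∈ zeroBand T, (zetaMult ρ : ℝ)

/-- Number of simple nontrivial zeros with `T < γ ≤ 2T`. -/
noncomputable def Nsimple (T : ℝ) : ℝ :=
  ∑ᶠ ρ ∈ {ρ ∈ zeroBand T | zetaMult ρ = 1}, (1 : ℝ)

/-- Number of nontrivial zeros with `T < γ ≤ 2T` on the critical line, with multiplicity. -/
noncomputable def Nline (T : ℝ) : ℝ :=
  ∑ᶠ ρ ∈ {ρ ∈ zeroBand T | ρ.re = 1/2}, (zetaMult ρ : ℝ)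

/-- Number of simple critical-line nontrivial zeros with `T < γ ≤ 2T`. -/
noncomputable def NlineSimple (T : ℝ) : ℝ :=
  ∑ᶠ ρ ∈ {ρ ∈ zeroBand T | ρ.re = 1/2 ∧ zetaMult ρ = 1}, (1 : ℝ)

/-- The weight `W(u) = 4/(4 - u²)`. -/
noncomputable def Wweight (u : ℂ) : ℂ := 4 / (4 - u ^ 2)

/-- `𝓕(x,T) = Σ_{ρ,ρ' : T<γ,γ'≤2T} x^{ρ-ρ'} W(ρ-ρ')`, pairs of nontrivial zeros
counted with multiplicity. -/
noncomputable def FF (x T : ℝ) : ℂ :=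
  ∑ᶠ ρ ∈ zeroBand T, ∑ᶠ ρ' ∈ zeroBand T,
    (zetaMult ρ : ℂ) * (zetaMult ρ' : ℂ) * (x : ℂ) ^ (ρ - ρ') * Wweight (ρ - ρ')

/-!
The weight is a Laplace transform: for `|Re a| < 2`,
`x ^ a * W a = ∫ e^{-2|u|} e^{a (u + log x)} du`. The band contains finitely many zeros, and it is
invariant, multiplicities included, under the reflection `ρ ↦ 1 - conj ρ` (conjugation symmetry
and functional equation of `ζ`). Reindexing the `ρ'`-sum by this reflection and using
`e^{-(1 - conj ρ) v} = e^{-v} conj (e^{ρ v})` turns the integrand of `𝓕(x,T)` into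
`e^{-2|u|} e^{-v} |∑ m_ρ e^{ρ v}|²` with `v = u + log x`, which is nonnegative.
The symmetry `x ↦ 1/x` is the swap `ρ ↔ ρ'`, since `W` is even.
-/

open Complex ComplexConjugate

section AnalyticOrder

variable {𝕜 : Type*} [NontriviallyNormedField 𝕜] [CharZero 𝕜] [CompleteSpace 𝕜] {f : 𝕜 → 𝕜}
  {z : 𝕜}

/-- Both sides are `0` when `f` vanishes near `z`: `sInf ∅ = 0` and `ENat.toNat ⊤ = 0`. -/
lemma AnalyticAt.sInf_setOf_iteratedDeriv_ne_zero (hf : AnalyticAt 𝕜 f z) :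
    sInf {n | iteratedDeriv n f z ≠ 0} = analyticOrderNatAt f z := by
  cases h : analyticOrderAt f z with
  | top =>
    have hzero : ∀ n, iteratedDeriv n f z = 0 := fun n =>
      (natCast_le_analyticOrderAt_iff_iteratedDeriv_eq_zero hf).1 (h ▸ le_top) n n.lt_succ_self
    simp [analyticOrderNatAt, h, hzero]
  | coe n =>
    obtain ⟨hlt, hn⟩ := (analyticOrderAt_eq_nat_iff_iteratedDeriv_eq_zero hf).1 h
    rw [analyticOrderNatAt, h, ENat.toNat_natCast]
    exact le_antisymm (Nat.sInf_le hn)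
      (le_csInf ⟨n, hn⟩ fun k hk => not_lt.1 fun hkn => hk (hlt k hkn))

end AnalyticOrder

lemma iteratedDeriv_conj_conj {𝕜 : Type*} [NontriviallyNormedField 𝕜] [StarRing 𝕜]
    [NormedStarGroup 𝕜] (f : 𝕜 → 𝕜) (n : ℕ) :
    iteratedDeriv n (conj ∘ f ∘ conj) = conj ∘ iteratedDeriv n f ∘ conj := by
  induction n with
  | zero => simp
  | succ n ih => rw [iteratedDeriv_succ, iteratedDeriv_succ, ih, deriv_conj_conj]

lemma iteratedDeriv_riemannZeta_conj (n : ℕ) (s : ℂ) :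
    iteratedDeriv n riemannZeta (conj s) = conj (iteratedDeriv n riemannZeta s) := by
  have hζ : conj ∘ riemannZeta ∘ conj = riemannZeta := funext fun s => by simp
  conv_lhs => rw [← hζ, iteratedDeriv_conj_conj]
  simp

lemma zetaMult_conj (s : ℂ) : zetaMult (conj s) = zetaMult s := by
  simp only [zetaMult, iteratedDeriv_riemannZeta_conj, ne_eq, map_eq_zero]

lemma zetaMult_eq_analyticOrderNatAt {s : ℂ} (hs : s ≠ 1) :
    zetaMult s = analyticOrderNatAt riemannZeta s :=
  (analyticOn_riemannZeta s hs).sInf_setOf_iteratedDeriv_ne_zero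

lemma cos_pi_mul_div_two_ne_zero {s : ℂ} (hs₀ : 0 < s.re) (hs₁ : s.re < 1) :
    cos (Real.pi * s / 2) ≠ 0 := by
  rw [Ne, cos_eq_zero_iff]
  rintro ⟨k, hk⟩
  have hs : s = 2 * k + 1 :=
    mul_left_cancel₀ (ofReal_ne_zero.2 Real.pi_ne_zero) (by linear_combination 2 * hk)
  have h₀ : (0 : ℝ) < 2 * k + 1 := by simpa [hs] using hs₀
  have h₁ : (2 * k + 1 : ℝ) < 1 := by simpa [hs] using hs₁
  have h₀' : (0 : ℤ) < 2 * k + 1 := by exact_mod_cast h₀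
  have h₁' : 2 * k + 1 < (1 : ℤ) := by exact_mod_cast h₁
  omega

lemma zetaMult_one_sub {s : ℂ} (hs₀ : 0 < s.re) (hs₁ : s.re < 1) :
    zetaMult (1 - s) = zetaMult s := by
  let strip : Set ℂ := {w | 0 < w.re ∧ w.re < 1}
  have hstrip : IsOpen strip :=
    (isOpen_lt continuous_const continuous_re).inter (isOpen_lt continuous_re continuous_const)
  have hs : s ∈ strip := ⟨hs₀, hs₁⟩
  have not_neg_nat {w : ℂ} (hw : w ∈ strip) (n : ℕ) : w ≠ -n := fun h => by
    have := hw.1; simp [h] at this; linarith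
  have ne_one {w : ℂ} (hw : w ∈ strip) : w ≠ 1 := fun h => by
    have := hw.2; simp [h] at this
  let Φ : ℂ → ℂ := fun w => 2 * (2 * Real.pi) ^ (-w) * Gamma w * cos (Real.pi * w / 2)
  have hfun_eq : riemannZeta ∘ (1 - ·) =ᶠ[𝓝 s] Φ * riemannZeta := by
    filter_upwards [hstrip.mem_nhds hs] with w hw
    exact riemannZeta_one_sub (not_neg_nat hw) (ne_one hw)
  have hΦ : AnalyticAt ℂ Φ s := by
    refine DifferentiableOn.analyticAt (fun w hw => DifferentiableAt.differentiableWithinAt ?_)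
      (hstrip.mem_nhds hs)
    have := differentiableAt_Gamma w (not_neg_nat hw)
    fun_prop (disch := simp [Real.pi_ne_zero])
  have hΦs : Φ s ≠ 0 := by
    have : (2 * Real.pi : ℂ) ≠ 0 := by simp [Real.pi_ne_zero]
    simp only [Φ, ne_eq, mul_eq_zero, OfNat.ofNat_ne_zero, false_or, not_or]
    exact ⟨⟨by simp [cpow_eq_zero_iff, this], Gamma_ne_zero (not_neg_nat hs)⟩,
      cos_pi_mul_div_two_ne_zero hs₀ hs₁⟩
  have horder : analyticOrderAt riemannZeta (1 - s) = analyticOrderAt riemannZeta s := by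
    rw [← analyticOrderAt_comp_of_deriv_ne_zero (g := (1 - ·)) (by fun_prop) (by simp),
      analyticOrderAt_congr hfun_eq,
      analyticOrderAt_mul hΦ (analyticOn_riemannZeta s (ne_one hs)),
      hΦ.analyticOrderAt_eq_zero.2 hΦs, zero_add]
  rw [zetaMult_eq_analyticOrderNatAt (by simpa using (ne_zero_of_re_pos hs₀)),
    zetaMult_eq_analyticOrderNatAt (ne_one hs), analyticOrderNatAt, analyticOrderNatAt, horder]

lemma zetaMult_one_sub_conj {ρ : ℂ} (h₀ : 0 < ρ.re) (h₁ : ρ.re < 1) :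
    zetaMult (1 - conj ρ) = zetaMult ρ := by
  rw [← map_one (starRingEnd ℂ), ← map_sub, zetaMult_conj, zetaMult_one_sub h₀ h₁]

lemma IsNontrivialZero.one_sub_conj {ρ : ℂ} (h : IsNontrivialZero ρ) :
    IsNontrivialZero (1 - conj ρ) := by
  obtain ⟨hζ, h₀, h₁⟩ := h
  have not_neg_nat (n : ℕ) : conj ρ ≠ -n := fun hn => by
    have := congrArg re hn; simp at this; linarith
  have ne_one : conj ρ ≠ 1 := fun h => by
    have := congrArg re h; simp at this; linarith
  refine ⟨?_, by simpa using h₁, by simpa using h₀⟩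
  rw [riemannZeta_one_sub not_neg_nat ne_one, riemannZeta_conj, hζ, map_zero, mul_zero]

lemma one_sub_conj_mem_zeroBand {T : ℝ} {ρ : ℂ} (h : ρ ∈ zeroBand T) :
    1 - conj ρ ∈ zeroBand T :=
  ⟨h.1.one_sub_conj, by simpa using h.2.1, by simpa using h.2.2⟩

lemma zeroBand_finite (T : ℝ) : (zeroBand T).Finite := by
  refine ((isCompact_Icc.reProdIm isCompact_Icc).inter_riemannZetaZeros_finite
    (S := Icc (0 : ℝ) 1 ×ℂ Icc T (2 * T))).subset ?_
  rintro ρ ⟨⟨hζ, h₀, h₁⟩, hT, h2T⟩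
  exact ⟨⟨⟨h₀.le, h₁.le⟩, hT.le, h2T⟩, hζ⟩

section LaplaceKernel

variable {c : ℝ} {a : ℂ}

lemma exp_neg_mul_abs_mul_cexp_of_nonpos {u : ℝ} (hu : u ≤ 0) :
    (Real.exp (-c * |u|) : ℂ) * cexp (a * u) = cexp ((a + c) * u) := by
  rw [abs_of_nonpos hu, ofReal_exp, ← Complex.exp_add]
  push_cast
  ring_nf

lemma exp_neg_mul_abs_mul_cexp_of_nonneg {u : ℝ} (hu : 0 ≤ u) :
    (Real.exp (-c * |u|) : ℂ) * cexp (a * u) = cexp ((a - c) * u) := by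
  rw [abs_of_nonneg hu, ofReal_exp, ← Complex.exp_add]
  push_cast
  ring_nf

lemma integrableOn_exp_neg_mul_abs_mul_cexp_Iic (ha : |a.re| < c) :
    IntegrableOn (fun u : ℝ => (Real.exp (-c * |u|) : ℂ) * cexp (a * u)) (Iic 0) :=
  (integrableOn_exp_mul_complex_Iic (by simp; linarith [neg_abs_le a.re]) 0).congr_fun
    (fun _ hu => (exp_neg_mul_abs_mul_cexp_of_nonpos hu).symm) measurableSet_Iic

lemma integrableOn_exp_neg_mul_abs_mul_cexp_Ioi (ha : |a.re| < c) :
    IntegrableOn (fun u : ℝ => (Real.exp (-c * |u|) : ℂ) * cexp (a * u)) (Ioi 0) :=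
  (integrableOn_exp_mul_complex_Ioi (by simp; linarith [le_abs_self a.re]) 0).congr_fun
    (fun _ hu => (exp_neg_mul_abs_mul_cexp_of_nonneg (le_of_lt hu)).symm) measurableSet_Ioi

lemma integrable_exp_neg_mul_abs_mul_cexp (ha : |a.re| < c) :
    Integrable fun u : ℝ => (Real.exp (-c * |u|) : ℂ) * cexp (a * u) := by
  rw [← integrableOn_univ, ← Iic_union_Ioi (a := 0)]
  exact (integrableOn_exp_neg_mul_abs_mul_cexp_Iic ha).union
    (integrableOn_exp_neg_mul_abs_mul_cexp_Ioi ha)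

lemma integral_exp_neg_mul_abs_mul_cexp (ha : |a.re| < c) :
    ∫ u : ℝ, (Real.exp (-c * |u|) : ℂ) * cexp (a * u) = 2 * c / (c ^ 2 - a ^ 2) := by
  have hac : a + c ≠ 0 := fun h => by
    have := congrArg re h; simp at this; linarith [neg_abs_le a.re]
  have hca : a - c ≠ 0 := fun h => by
    have := congrArg re h; simp at this; linarith [le_abs_self a.re]
  rw [← intervalIntegral.integral_Iic_add_Ioi (integrableOn_exp_neg_mul_abs_mul_cexp_Iic ha)
    (integrableOn_exp_neg_mul_abs_mul_cexp_Ioi ha),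
    setIntegral_congr_fun measurableSet_Iic fun _ hu => exp_neg_mul_abs_mul_cexp_of_nonpos hu,
    setIntegral_congr_fun measurableSet_Ioi fun _ hu => exp_neg_mul_abs_mul_cexp_of_nonneg
      (le_of_lt hu),
    integral_exp_mul_complex_Iic (by simp; linarith [neg_abs_le a.re]),
    integral_exp_mul_complex_Ioi (by simp; linarith [le_abs_self a.re])]
  have hden : (c : ℂ) ^ 2 - a ^ 2 ≠ 0 := by
    rw [show (c : ℂ) ^ 2 - a ^ 2 = -((a + c) * (a - c)) by ring]
    exact neg_ne_zero.2 (mul_ne_zero hac hca)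
  simp only [ofReal_zero, mul_zero, Complex.exp_zero]
  field_simp
  ring

end LaplaceKernel

lemma Wweight_eq_integral {a : ℂ} (ha : |a.re| < 2) :
    Wweight a = ∫ u : ℝ, (Real.exp (-2 * |u|) : ℂ) * cexp (a * u) := by
  rw [integral_exp_neg_mul_abs_mul_cexp (by simpa using ha), Wweight]
  norm_num

lemma ofReal_cpow_mul_cexp {x : ℝ} (hx : 0 < x) (a : ℂ) (u : ℝ) :
    (x : ℂ) ^ a * cexp (a * u) = cexp (a * (u + Real.log x : ℝ)) := by
  rw [cpow_def_of_ne_zero (ofReal_ne_zero.2 hx.ne'), ← ofReal_log hx.le, ← Complex.exp_add]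
  push_cast
  ring_nf

section ExponentialSum

variable {s : Finset ℂ} {m : ℂ → ℝ}

lemma sum_sum_mul_cexp_sub_mul_eq_normSq (hs : ∀ ρ ∈ s, 1 - conj ρ ∈ s)
    (hm : ∀ ρ ∈ s, m (1 - conj ρ) = m ρ) (v : ℝ) :
    ∑ ρ ∈ s, ∑ ρ' ∈ s, (m ρ * m ρ' : ℂ) * cexp ((ρ - ρ') * v) =
      (Real.exp (-v) * normSq (∑ ρ ∈ s, m ρ * cexp (ρ * v)) : ℝ) := by
  set S := ∑ ρ ∈ s, (m ρ : ℂ) * cexp (ρ * v)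
  have hreflect : ∑ ρ ∈ s, (m ρ : ℂ) * cexp (-(ρ * v)) = cexp (-v) * conj S := by
    have hreindex : ∑ ρ ∈ s, (m ρ : ℂ) * cexp (-(ρ * v))
        = ∑ ρ ∈ s, (m (1 - conj ρ) : ℂ) * cexp (-((1 - conj ρ) * v)) :=
      Finset.sum_nbij' (fun ρ => 1 - conj ρ) (fun ρ => 1 - conj ρ) hs hs (by simp) (by simp)
        (by simp)
    rw [hreindex, map_sum, Finset.mul_sum]
    refine Finset.sum_congr rfl fun ρ hρ => ?_
    rw [hm ρ hρ, map_mul, conj_ofReal, ← Complex.exp_conj, mul_left_comm, ← Complex.exp_add]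
    congr 2
    simp only [map_mul, conj_ofReal]
    ring
  calc ∑ ρ ∈ s, ∑ ρ' ∈ s, (m ρ * m ρ' : ℂ) * cexp ((ρ - ρ') * v)
      = S * ∑ ρ ∈ s, (m ρ : ℂ) * cexp (-(ρ * v)) := by
        rw [Finset.sum_mul_sum]
        refine Finset.sum_congr rfl fun ρ _ => Finset.sum_congr rfl fun ρ' _ => ?_
        rw [sub_mul, sub_eq_add_neg, Complex.exp_add]
        ring
    _ = cexp (-v) * (S * conj S) := by rw [hreflect]; ring
    _ = (Real.exp (-v) * normSq S : ℝ) := by rw [mul_conj, ofReal_mul, ofReal_exp, ofReal_neg]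

lemma sum_sum_mul_cpow_mul_Wweight_eq_integral {x : ℝ} (hx : 0 < x)
    (hs : ∀ ρ ∈ s, 1 - conj ρ ∈ s) (hm : ∀ ρ ∈ s, m (1 - conj ρ) = m ρ)
    (hre : ∀ ρ ∈ s, ∀ ρ' ∈ s, |(ρ - ρ').re| < 2) :
    ∑ ρ ∈ s, ∑ ρ' ∈ s, (m ρ * m ρ' : ℂ) * (x : ℂ) ^ (ρ - ρ') * Wweight (ρ - ρ') =
      (∫ u : ℝ, Real.exp (-2 * |u|) * (Real.exp (-(u + Real.log x))
        * normSq (∑ ρ ∈ s, m ρ * cexp (ρ * (u + Real.log x : ℝ)))) : ℝ) := by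
  let k : ℝ → ℂ := fun u => Real.exp (-2 * |u|)
  have hk {a : ℂ} (ha : |a.re| < 2) : Integrable fun u : ℝ => k u * cexp (a * u) :=
    integrable_exp_neg_mul_abs_mul_cexp (by simpa using ha)
  calc ∑ ρ ∈ s, ∑ ρ' ∈ s, (m ρ * m ρ' : ℂ) * (x : ℂ) ^ (ρ - ρ') * Wweight (ρ - ρ')
      = ∑ ρ ∈ s, ∑ ρ' ∈ s, ∫ u : ℝ,
          (m ρ * m ρ' : ℂ) * (x : ℂ) ^ (ρ - ρ') * (k u * cexp ((ρ - ρ') * u)) := by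
        refine Finset.sum_congr rfl fun ρ hρ => Finset.sum_congr rfl fun ρ' hρ' => ?_
        rw [Wweight_eq_integral (hre ρ hρ ρ' hρ'), integral_const_mul]
    _ = ∫ u : ℝ, ∑ ρ ∈ s, ∑ ρ' ∈ s,
          (m ρ * m ρ' : ℂ) * (x : ℂ) ^ (ρ - ρ') * (k u * cexp ((ρ - ρ') * u)) := by
        rw [integral_finsetSum _ fun ρ hρ => integrable_finsetSum _ fun ρ' hρ' =>
          (hk (hre ρ hρ ρ' hρ')).const_mul _]
        refine Finset.sum_congr rfl fun ρ hρ => ?_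
        rw [integral_finsetSum _ fun ρ' hρ' => (hk (hre ρ hρ ρ' hρ')).const_mul _]
    _ = ∫ u : ℝ, ((Real.exp (-2 * |u|) * (Real.exp (-(u + Real.log x))
          * normSq (∑ ρ ∈ s, m ρ * cexp (ρ * (u + Real.log x : ℝ)))) : ℝ) : ℂ) := by
        refine integral_congr_ae (.of_forall fun u => ?_)
        dsimp only
        rw [ofReal_mul, ← sum_sum_mul_cexp_sub_mul_eq_normSq hs hm, Finset.mul_sum]
        refine Finset.sum_congr rfl fun ρ _ => ?_
        rw [Finset.mul_sum]
        refine Finset.sum_congr rfl fun ρ' _ => ?_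
        rw [← ofReal_cpow_mul_cexp hx]
        ring
    _ = _ := integral_ofReal

end ExponentialSum

lemma Wweight_neg (a : ℂ) : Wweight (-a) = Wweight a := by
  rw [Wweight, Wweight, neg_sq]

lemma ofReal_one_div_cpow {x : ℝ} (hx : 0 < x) (a : ℂ) :
    ((1 / x : ℝ) : ℂ) ^ a = (x : ℂ) ^ (-a) := by
  have harg : (x : ℂ).arg ≠ Real.pi := by
    simp [arg_ofReal_of_nonneg hx.le, Real.pi_ne_zero.symm]
  rw [one_div, ofReal_inv, inv_cpow _ _ harg, cpow_neg]

lemma FF_eq_sum (x T : ℝ) :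
    FF x T = ∑ ρ ∈ (zeroBand_finite T).toFinset, ∑ ρ' ∈ (zeroBand_finite T).toFinset,
      (zetaMult ρ : ℂ) * (zetaMult ρ' : ℂ) * (x : ℂ) ^ (ρ - ρ') * Wweight (ρ - ρ') := by
  simp only [FF, ← finsum_mem_coe_finset, Set.Finite.coe_toFinset]

lemma FF_one_div {x : ℝ} (hx : 0 < x) (T : ℝ) : FF (1 / x) T = FF x T := by
  rw [FF_eq_sum, FF_eq_sum, Finset.sum_comm]
  refine Finset.sum_congr rfl fun ρ _ => Finset.sum_congr rfl fun ρ' _ => ?_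
  rw [ofReal_one_div_cpow hx, neg_sub, ← Wweight_neg, neg_sub]
  ring

lemma FF_eq_ofReal_integral {x : ℝ} (hx : 0 < x) (T : ℝ) :
    FF x T = (∫ u : ℝ, Real.exp (-2 * |u|) * (Real.exp (-(u + Real.log x))
      * normSq (∑ ρ ∈ (zeroBand_finite T).toFinset,
          (zetaMult ρ : ℝ) * cexp (ρ * (u + Real.log x : ℝ)))) : ℝ) := by
  have hmem {ρ : ℂ} : ρ ∈ (zeroBand_finite T).toFinset ↔ ρ ∈ zeroBand T :=
    Set.Finite.mem_toFinset _
  rw [FF_eq_sum, ← sum_sum_mul_cpow_mul_Wweight_eq_integral hx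
    (fun ρ hρ => hmem.2 (one_sub_conj_mem_zeroBand (hmem.1 hρ)))
    (fun ρ hρ => by rw [zetaMult_one_sub_conj (hmem.1 hρ).1.2.1 (hmem.1 hρ).1.2.2])]
  · simp only [ofReal_natCast]
  · intro ρ hρ ρ' hρ'
    obtain ⟨⟨-, h₀, h₁⟩, -⟩ := hmem.1 hρ
    obtain ⟨⟨-, h₀', h₁'⟩, -⟩ := hmem.1 hρ'
    rw [sub_re, abs_lt]
    constructor <;> linarith

theorem FF_nonneg_real_and_symm_general (x T : ℝ) (hx : 0 < x) :
    (FF x T).im = 0 ∧ 0 ≤ (FF x T).re ∧ FF (1/x) T = FF x T := by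
  refine ⟨?_, ?_, FF_one_div hx T⟩ <;> rw [FF_eq_ofReal_integral hx]
  · exact ofReal_im _
  · rw [ofReal_re]
    exact integral_nonneg fun u =>
      mul_nonneg (Real.exp_nonneg _) (mul_nonneg (Real.exp_nonneg _) (normSq_nonneg _))

/-- For `x > 0` and `T ≥ 3`, `𝓕(x,T)` is a nonnegative real number and
`𝓕(1/x,T) = 𝓕(x,T)`. -/
theorem FF_nonneg_real_and_symm (x T : ℝ) (hx : 0 < x) (hT : 3 ≤ T) :
    (FF x T).im = 0 ∧ 0 ≤ (FF x T).re ∧ FF (1/x) T = FF x T :=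
  FF_nonneg_real_and_symm_general x T hx
end

section
/- Let b > 0 and let z = x + iy be a complex number with x, y real and |y| < b. Then ∫_{−∞}^{∞} cos(2πzt)/cosh(2πbt) dt = 1/(2b cosh(πz/(2b))). -/
/-!
Substituting `x = σ(s)`, with `σ` the logistic sigmoid, in Euler's beta integral turns
`B(c, 1 - c) = Γ(c) Γ(1 - c) = π / sin (π c)` into `∫ e^{cs} / (1 + e^s) ds = π / sin (π c)`
for `0 < Re c < 1`. Rescaling `s = 2t` gives `∫ e^{wt} / cosh t dt = π / cos (π w / 2)` for
`|Re w| < 1`; averaging `w = ± i a` gives `∫ cos (a s) / cosh s ds = π / cosh (π a / 2)`, and the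
theorem is the case `a = z / b` after the change of variables `s = 2πbt`.
-/

open Filter Topology MeasureTheory Set

open Complex
open scoped Real
open Real (sigmoid sigmoid_pos sigmoid_neg sigmoid_injective range_sigmoid hasDerivAt_sigmoid
  sigmoid_mul_rexp_neg)

lemma Complex.ofReal_exp_cpow (s : ℝ) (c : ℂ) : (Real.exp s : ℂ) ^ c = cexp (c * s) := by
  rw [cpow_def_of_ne_zero (by exact_mod_cast (Real.exp_pos s).ne'),
    ← ofReal_log (Real.exp_pos s).le, Real.log_exp, mul_comm]

lemma Complex.betaIntegral_eq_integral_sigmoid (u v : ℂ) :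
    betaIntegral u v = ∫ s : ℝ, (sigmoid s : ℂ) ^ u * (sigmoid (-s) : ℂ) ^ v := by
  have hderiv : ∀ s ∈ univ, HasDerivWithinAt sigmoid (sigmoid s * (1 - sigmoid s)) univ s :=
    fun s _ => (hasDerivAt_sigmoid s).hasDerivWithinAt
  rw [betaIntegral, intervalIntegral.integral_of_le zero_le_one, integral_Ioc_eq_integral_Ioo,
    ← range_sigmoid, ← image_univ, integral_image_eq_integral_abs_deriv_smul MeasurableSet.univ
      hderiv sigmoid_injective.injOn, setIntegral_univ]
  congr 1 with s
  have hs : (sigmoid s : ℂ) ≠ 0 := by exact_mod_cast (sigmoid_pos s).ne'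
  have hs' : (sigmoid (-s) : ℂ) ≠ 0 := by exact_mod_cast (sigmoid_pos (-s)).ne'
  have hneg : (1 : ℂ) - sigmoid s = sigmoid (-s) := by rw [sigmoid_neg]; push_cast; rfl
  rw [← sigmoid_neg s, abs_of_pos (mul_pos (sigmoid_pos s) (sigmoid_pos (-s))), real_smul,
    ofReal_mul, hneg, cpow_sub _ _ hs, cpow_sub _ _ hs', cpow_one, cpow_one]
  field_simp

lemma integral_cexp_mul_sigmoid_neg {c : ℂ} (hc0 : 0 < c.re) (hc1 : c.re < 1) :
    ∫ s : ℝ, cexp (c * s) * (sigmoid (-s) : ℂ) = π / sin (π * c) := by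
  have hc1' : 0 < (1 - c).re := by simpa using hc1
  rw [← Gamma_mul_Gamma_one_sub, Gamma_mul_Gamma_eq_betaIntegral hc0 hc1', add_sub_cancel,
    Gamma_one, one_mul, betaIntegral_eq_integral_sigmoid]
  congr 1 with s
  have hs' : (sigmoid (-s) : ℂ) ≠ 0 := by exact_mod_cast (sigmoid_pos (-s)).ne'
  have hs : sigmoid s = Real.exp s * sigmoid (-s) := by
    simpa [mul_comm] using (sigmoid_mul_rexp_neg (-s)).symm
  rw [hs, ofReal_mul,
    mul_cpow_ofReal_nonneg (Real.exp_pos s).le (sigmoid_pos _).le, ofReal_exp_cpow, mul_assoc,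
    ← cpow_add _ _ hs', add_sub_cancel, cpow_one]

lemma Complex.cos_pi_mul_div_two_ne_zero {w : ℂ} (hw : |w.re| < 1) : cos (π * w / 2) ≠ 0 := by
  rw [Ne, cos_eq_zero_iff]
  rintro ⟨k, hk⟩
  have hw' : w = 2 * k + 1 := by
    have hπ : (π : ℂ) ≠ 0 := ofReal_ne_zero.mpr Real.pi_ne_zero
    field_simp at hk
    linear_combination hk
  have hre : w.re = 2 * k + 1 := by simp [hw']
  rw [hre, abs_lt] at hw
  have : (-1 : ℝ) < k ∧ (k : ℝ) < 0 := ⟨by linarith, by linarith⟩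
  norm_cast at this
  omega

lemma cexp_mul_div_cosh_eq_sigmoid (w : ℂ) (t : ℝ) :
    cexp (w * t) / cosh t = 2 * (cexp ((w + 1) / 2 * ↑(2 * t)) * (sigmoid (-(2 * t)) : ℂ)) := by
  have hcosh : cosh t = (cexp t + cexp (-t)) / 2 := by rw [← two_cosh]; ring
  have ht : cexp t ≠ 0 := exp_ne_zero _
  rw [Real.sigmoid_def, neg_neg, hcosh, exp_neg]
  push_cast
  rw [show (w + 1) / 2 * (2 * t) = w * t + t by ring, exp_add,
    show 2 * (t : ℂ) = t + t by ring, exp_add]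
  field_simp
  ring

lemma integral_cexp_mul_div_cosh {w : ℂ} (hw : |w.re| < 1) :
    ∫ t : ℝ, cexp (w * t) / cosh t = π / cos (π * w / 2) := by
  obtain ⟨hw0, hw1⟩ := abs_lt.mp hw
  have hc0 : 0 < ((w + 1) / 2).re := by rw [div_ofNat_re, add_re, one_re]; linarith
  have hc1 : ((w + 1) / 2).re < 1 := by rw [div_ofNat_re, add_re, one_re]; linarith
  simp_rw [cexp_mul_div_cosh_eq_sigmoid, integral_const_mul,
    Measure.integral_comp_mul_left (fun s : ℝ => cexp ((w + 1) / 2 * s) * (sigmoid (-s) : ℂ)),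
    integral_cexp_mul_sigmoid_neg hc0 hc1]
  rw [show (π : ℂ) * ((w + 1) / 2) = π * w / 2 + π / 2 by ring, sin_add_pi_div_two, abs_of_pos (inv_pos.mpr two_pos), real_smul]
  push_cast
  ring

lemma integrable_cexp_mul_div_cosh {w : ℂ} (hw : |w.re| < 1) :
    Integrable fun t : ℝ => cexp (w * t) / cosh t :=
  -- a function that is not integrable has Bochner integral `0`
  .of_integral_ne_zero <| by
    rw [integral_cexp_mul_div_cosh hw]
    exact div_ne_zero (ofReal_ne_zero.mpr Real.pi_ne_zero) (cos_pi_mul_div_two_ne_zero hw)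

lemma integral_cos_mul_div_cosh {a : ℂ} (ha : |a.im| < 1) :
    ∫ s : ℝ, cos (a * s) / cosh s = π / cosh (π * a / 2) := by
  have hw : |(a * I).re| < 1 := by simpa using ha
  have hw' : |(-(a * I)).re| < 1 := by simpa using ha
  have hcos (s : ℝ) : cos (a * s) / cosh s =
      (cexp (a * I * s) / cosh s + cexp (-(a * I) * s) / cosh s) / 2 := by
    rw [← add_div, div_right_comm, cos]
    ring_nf
  calc ∫ s : ℝ, cos (a * s) / cosh s
      = ∫ s : ℝ, (cexp (a * I * s) / cosh s + cexp (-(a * I) * s) / cosh s) / 2 := by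
        simp_rw [hcos]
    _ = (π / cos (π * (a * I) / 2) + π / cos (π * -(a * I) / 2)) / 2 := by
        rw [integral_div, integral_add (integrable_cexp_mul_div_cosh hw)
          (integrable_cexp_mul_div_cosh hw'), integral_cexp_mul_div_cosh hw,
          integral_cexp_mul_div_cosh hw']
    _ = π / cosh (π * a / 2) := by
        rw [show π * -(a * I) / 2 = -(π * a / 2 * I) by ring, cos_neg,
          show π * (a * I) / 2 = π * a / 2 * I by ring, cos_mul_I]
        ring

/-- For `b > 0` and `z = x + iy` with `|y| < b`,
`∫ cos(2πzt)/cosh(2πbt) dt = 1/(2b cosh(πz/(2b)))`. -/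
theorem integral_cos_div_cosh (b : ℝ) (hb : 0 < b) (z : ℂ) (hz : |z.im| < b) :
    (∫ t : ℝ, Complex.cos (2 * Real.pi * z * t) / Complex.cosh (2 * Real.pi * b * t))
      = 1 / (2 * b * Complex.cosh (Real.pi * z / (2 * b))) := by
  have hb' : (b : ℂ) ≠ 0 := ofReal_ne_zero.mpr hb.ne'
  have hπ : (π : ℂ) ≠ 0 := ofReal_ne_zero.mpr Real.pi_ne_zero
  have ha : |(z / b).im| < 1 := by
    rwa [div_ofReal_im, abs_div, abs_of_pos hb, div_lt_one hb]
  let F : ℝ → ℂ := fun s => cos (z / b * s) / cosh s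
  calc (∫ t : ℝ, cos (2 * π * z * t) / cosh (2 * π * b * t))
      = ∫ t : ℝ, F (2 * π * b * t) := by
        congr 1 with t
        simp only [F]
        push_cast
        congr 2
        field_simp
    _ = |(2 * π * b)⁻¹| • ∫ s : ℝ, F s := Measure.integral_comp_mul_left F _
    _ = 1 / (2 * b * cosh (π * z / (2 * b))) := by
        rw [integral_cos_mul_div_cosh ha, abs_of_pos (by positivity), real_smul]
        push_cast
        field_simp
end
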